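/- arXiv:1910.10659 — 2 statements merged into one kernel-verified Lean document; each statement's English description precedes it below -/
import Mathlib

section
/- Let λ* > 0 and L be real numbers with L < (1/4)(λ*)², let J : ℝ → ℝ be a function satisfying J(λ) ≥ 0 for all λ ∈ [0, λ*], and let f, g : [0, T) → ℝ (with 0 < T ≤ ∞) be continuous nonnegative functions such that f(0) < λ*, g(0) < λ*, and for every t ∈ [0, T) one has (1/4)f(t)² + J(f(t)) + (1/4)g(t)² + J(g(t)) ≤ L. Then f(t) < λ* and g(t) < λ* for every t ∈ [0, T). -/
open scoped ENNReal

/-!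
As long as `max f g` stays at most `λ*`, both values lie in `[0, λ*]`, where `J ≥ 0`; so at
a time where `max f g = λ*` the energy would be at least `(1/4)(λ*)² > L`. Hence `max f g`
never takes the value `λ*`, and since it starts below `λ*` on the interval `[0, T)`, the
intermediate value theorem keeps it below `λ*`.
-/

theorem ENNReal.ordConnected_setOf_nonneg_ofReal_lt (T : ℝ≥0∞) :
    {t : ℝ | 0 ≤ t ∧ ENNReal.ofReal t < T}.OrdConnected :=
  ⟨fun _ ha _ hb _ hx => ⟨ha.1.trans hx.1, (ENNReal.ofReal_le_ofReal hx.2).trans_lt hb.2⟩⟩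

theorem IsPreconnected.forall_lt_of_forall_ne {X α : Type*} [TopologicalSpace X]
    [LinearOrder α] [TopologicalSpace α] [OrderClosedTopology α] {S : Set X}
    (hS : IsPreconnected S) {h : X → α} (hh : ContinuousOn h S) {a : X} (ha : a ∈ S)
    {c : α} (hac : h a < c) (hne : ∀ x ∈ S, h x ≠ c) : ∀ x ∈ S, h x < c := by
  intro x hx
  by_contra! hcx
  obtain ⟨y, hy, hyc⟩ := hS.intermediate_value ha hx hh ⟨hac.le, hcx⟩
  exact hne y hy hyc

theorem quarter_sq_le_energy_of_max_eq {lam : ℝ} {J : ℝ → ℝ}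
    (hJ : ∀ x ∈ Set.Icc (0 : ℝ) lam, 0 ≤ J x) {x y : ℝ} (hx : 0 ≤ x) (hy : 0 ≤ y)
    (hxy : max x y = lam) :
    (1 / 4) * lam ^ 2 ≤ (1 / 4) * x ^ 2 + J x + (1 / 4) * y ^ 2 + J y := by
  have hJx : 0 ≤ J x := hJ x ⟨hx, hxy ▸ le_max_left x y⟩
  have hJy : 0 ≤ J y := hJ y ⟨hy, hxy ▸ le_max_right x y⟩
  rcases max_choice x y with h | h <;> rw [h] at hxy <;> subst hxy <;> nlinarith

theorem stmt6_general (lam L : ℝ) (hL : L < (1 / 4) * lam ^ 2)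
    (J : ℝ → ℝ) (hJ : ∀ x ∈ Set.Icc (0 : ℝ) lam, 0 ≤ J x)
    (T : ℝ≥0∞) (f g : ℝ → ℝ)
    (hfc : ContinuousOn f {t : ℝ | 0 ≤ t ∧ ENNReal.ofReal t < T})
    (hgc : ContinuousOn g {t : ℝ | 0 ≤ t ∧ ENNReal.ofReal t < T})
    (hfpos : ∀ t : ℝ, 0 ≤ t → ENNReal.ofReal t < T → 0 ≤ f t)
    (hgpos : ∀ t : ℝ, 0 ≤ t → ENNReal.ofReal t < T → 0 ≤ g t)
    (hf0 : f 0 < lam) (hg0 : g 0 < lam)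
    (hineq : ∀ t : ℝ, 0 ≤ t → ENNReal.ofReal t < T →
      (1 / 4) * (f t) ^ 2 + J (f t) + (1 / 4) * (g t) ^ 2 + J (g t) ≤ L) :
    ∀ t : ℝ, 0 ≤ t → ENNReal.ofReal t < T → f t < lam ∧ g t < lam := by
  intro t ht htT
  have hS := (ENNReal.ordConnected_setOf_nonneg_ofReal_lt T).isPreconnected
  have h0 : ENNReal.ofReal 0 < T := (ENNReal.ofReal_le_ofReal ht).trans_lt htT
  have hne : ∀ s ∈ {t : ℝ | 0 ≤ t ∧ ENNReal.ofReal t < T}, max (f s) (g s) ≠ lam :=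
    fun s ⟨hs, hsT⟩ heq => (hineq s hs hsT).not_gt <| hL.trans_le <|
      quarter_sq_le_energy_of_max_eq hJ (hfpos s hs hsT) (hgpos s hs hsT) heq
  exact max_lt_iff.mp <|
    hS.forall_lt_of_forall_ne (hfc.sup hgc) ⟨le_rfl, h0⟩ (max_lt hf0 hg0) hne t ⟨ht, htT⟩

/-- (Abstract continuation/invariance argument, Lemma 3.1.)
Let `λ* > 0` and `L < (1/4)(λ*)²`, let `J` satisfy `J(λ) ≥ 0` on `[0, λ*]`, and let
`f, g : [0, T) → ℝ` (with `0 < T ≤ ∞`) be continuous nonnegative functions with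
`f(0) < λ*`, `g(0) < λ*` and
`(1/4)f(t)² + J(f(t)) + (1/4)g(t)² + J(g(t)) ≤ L` for all `t ∈ [0, T)`.
Then `f(t) < λ*` and `g(t) < λ*` for all `t ∈ [0, T)`.
Here `[0, T)` is encoded as `{t : ℝ | 0 ≤ t ∧ ENNReal.ofReal t < T}` with `T : ℝ≥0∞`. -/
theorem stmt6 (lam L : ℝ) (hlam : 0 < lam) (hL : L < (1 / 4) * lam ^ 2)
    (J : ℝ → ℝ) (hJ : ∀ x ∈ Set.Icc (0 : ℝ) lam, 0 ≤ J x)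
    (T : ℝ≥0∞) (hT : 0 < T) (f g : ℝ → ℝ)
    (hfc : ContinuousOn f {t : ℝ | 0 ≤ t ∧ ENNReal.ofReal t < T})
    (hgc : ContinuousOn g {t : ℝ | 0 ≤ t ∧ ENNReal.ofReal t < T})
    (hfpos : ∀ t : ℝ, 0 ≤ t → ENNReal.ofReal t < T → 0 ≤ f t)
    (hgpos : ∀ t : ℝ, 0 ≤ t → ENNReal.ofReal t < T → 0 ≤ g t)
    (hf0 : f 0 < lam) (hg0 : g 0 < lam)
    (hineq : ∀ t : ℝ, 0 ≤ t → ENNReal.ofReal t < T →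
      (1 / 4) * (f t) ^ 2 + J (f t) + (1 / 4) * (g t) ^ 2 + J (g t) ≤ L) :
    ∀ t : ℝ, 0 ≤ t → ENNReal.ofReal t < T → f t < lam ∧ g t < lam :=
  stmt6_general lam L hL J hJ T f g hfc hgc hfpos hgpos hf0 hg0 hineq
end

section
/- Let m₀, P, D be positive real numbers and set τ = min{ 1/(2P), m₀/D }. Let E, ψ : [0, ∞) → ℝ be differentiable functions and g : [0, ∞) → ℝ a function such that for all t ≥ 0: E(t) ≥ 0, g(t) ≥ 0, E'(t) ≤ −m₀ g(t), |ψ(t)| ≤ P·E(t), and ψ'(t) ≤ −(1/2)E(t) + D·g(t). Then E(t) ≤ 3 E(0) e^{−(τ/3) t} for all t ∈ [0, ∞). -/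
/-!
The perturbed energy `F = E + τ ψ` is equivalent to `E` (`E/2 ≤ F ≤ 3E/2`, because `τ P ≤ 1/2`),
and the choice `τ D ≤ m₀` lets the dissipation `-m₀ g` of `E` absorb the term `τ D g` in `τ ψ'`,
so `F' ≤ -(τ/2) E ≤ -(τ/3) F`. Grönwall gives `F t ≤ F 0 e^{-(τ/3) t}`, and the equivalence
converts this back into `E t ≤ 3 E 0 e^{-(τ/3) t}`.
-/

open Set Real

theorem le_mul_exp_of_hasDerivWithinAt_le_mul {F F' : ℝ → ℝ} {K a : ℝ}
    (hF : ∀ t, a ≤ t → HasDerivWithinAt F (F' t) (Ici a) t)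
    (hF' : ∀ t, a ≤ t → F' t ≤ K * F t) {t : ℝ} (ht : a ≤ t) :
    F t ≤ F a * exp (K * (t - a)) := by
  have hcont : ContinuousOn F (Icc a t) := fun s hs =>
    (hF s hs.1).continuousWithinAt.mono Icc_subset_Ici_self
  have hslope : ∀ s ∈ Ico a t, ∀ r, F' s < r →
      ∃ᶠ z in nhdsWithin s (Ioi s), (z - s)⁻¹ * (F z - F s) < r := fun s hs _ hr =>
    ((hF s hs.1).mono (Ici_subset_Ici.mpr hs.1)).liminf_right_slope_le hr
  have := le_gronwallBound_of_liminf_deriv_right_le (K := K) (ε := 0) hcont hslope le_rfl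
    (fun s hs => (add_zero (K * F s)).symm ▸ hF' s hs.1) t ⟨ht, le_rfl⟩
  rwa [gronwallBound_ε0] at this

theorem abs_mul_le_half_of_abs_le_mul {ε P p e : ℝ} (hε : 0 ≤ ε) (hεP : ε * P ≤ 1 / 2)
    (hp : |p| ≤ P * e) (he : 0 ≤ e) : |ε * p| ≤ e / 2 :=
  calc |ε * p| = ε * |p| := by rw [abs_mul, abs_of_nonneg hε]
    _ ≤ ε * (P * e) := by gcongr
    _ = (ε * P) * e := by ring
    _ ≤ 1 / 2 * e := by gcongr
    _ = e / 2 := by ring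

theorem add_mul_le_neg_half_mul_of_dissipation {ε m₀ D e g e' p' : ℝ} (hε : 0 ≤ ε)
    (hεD : ε * D ≤ m₀) (hg : 0 ≤ g) (he' : e' ≤ -m₀ * g) (hp' : p' ≤ -(1 / 2) * e + D * g) :
    e' + ε * p' ≤ -(ε / 2) * e := by
  have hp'ε : ε * p' ≤ ε * (-(1 / 2) * e + D * g) := by gcongr
  nlinarith [mul_le_mul_of_nonneg_right hεD hg]

/-- (Abstract perturbed-energy / Komornik–Zuazua argument, Theorem 2.5.)
Let `m₀, P, D > 0` and `τ = min(1/(2P), m₀/D)`.  Let `E, ψ : [0,∞) → ℝ` be differentiable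
(with derivatives `E'`, `ψ'` in the sense of `HasDerivWithinAt` on `[0,∞)`) and
`g : [0,∞) → ℝ` such that for all `t ≥ 0`: `E(t) ≥ 0`, `g(t) ≥ 0`, `E'(t) ≤ −m₀ g(t)`,
`|ψ(t)| ≤ P·E(t)` and `ψ'(t) ≤ −(1/2)E(t) + D·g(t)`.
Then `E(t) ≤ 3 E(0) e^{−(τ/3)t}` for all `t ≥ 0`. -/
theorem stmt9 (m₀ P D : ℝ) (hm₀ : 0 < m₀) (hP : 0 < P) (hD : 0 < D)
    (τ : ℝ) (hτ : τ = min (1 / (2 * P)) (m₀ / D))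
    (E ψ : ℝ → ℝ) (E' ψ' g : ℝ → ℝ)
    (hE : ∀ t : ℝ, 0 ≤ t → HasDerivWithinAt E (E' t) (Set.Ici 0) t)
    (hψ : ∀ t : ℝ, 0 ≤ t → HasDerivWithinAt ψ (ψ' t) (Set.Ici 0) t)
    (hEpos : ∀ t : ℝ, 0 ≤ t → 0 ≤ E t)
    (hgpos : ∀ t : ℝ, 0 ≤ t → 0 ≤ g t)
    (hE' : ∀ t : ℝ, 0 ≤ t → E' t ≤ -m₀ * g t)
    (hψbd : ∀ t : ℝ, 0 ≤ t → |ψ t| ≤ P * E t)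
    (hψ' : ∀ t : ℝ, 0 ≤ t → ψ' t ≤ -(1 / 2) * E t + D * g t) :
    ∀ t : ℝ, 0 ≤ t → E t ≤ 3 * E 0 * Real.exp (-(τ / 3) * t) := by
  have hτ₀ : 0 ≤ τ := hτ ▸ le_min (by positivity) (by positivity)
  have hτP : τ * P ≤ 1 / 2 := by
    have := (le_div_iff₀ (by positivity)).mp (hτ ▸ min_le_left _ _ : τ ≤ 1 / (2 * P))
    linarith
  have hτD : τ * D ≤ m₀ := (le_div_iff₀ hD).mp (hτ ▸ min_le_right _ _)
  have hequiv : ∀ t, 0 ≤ t → |τ * ψ t| ≤ E t / 2 := fun t ht =>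
    abs_mul_le_half_of_abs_le_mul hτ₀ hτP (hψbd t ht) (hEpos t ht)
  have hdecay : ∀ t, 0 ≤ t → E' t + τ * ψ' t ≤ -(τ / 3) * (E t + τ * ψ t) := fun t ht => by
    have hF' := add_mul_le_neg_half_mul_of_dissipation hτ₀ hτD (hgpos t ht) (hE' t ht) (hψ' t ht)
    have hF : E t + τ * ψ t ≤ 3 / 2 * E t := by linarith [le_abs_self (τ * ψ t), hequiv t ht]
    linarith [mul_le_mul_of_nonneg_left hF (by positivity : 0 ≤ τ / 3)]
  intro t ht
  have hF := le_mul_exp_of_hasDerivWithinAt_le_mul (F := fun s => E s + τ * ψ s)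
    (fun s hs => (hE s hs).add ((hψ s hs).const_mul τ)) hdecay ht
  rw [sub_zero] at hF
  have hF0 : E 0 + τ * ψ 0 ≤ 3 / 2 * E 0 := by linarith [le_abs_self (τ * ψ 0), hequiv 0 le_rfl]
  calc E t ≤ 2 * (E t + τ * ψ t) := by linarith [neg_abs_le (τ * ψ t), hequiv t ht]
    _ ≤ 2 * ((E 0 + τ * ψ 0) * exp (-(τ / 3) * t)) := by gcongr
    _ ≤ 2 * (3 / 2 * E 0 * exp (-(τ / 3) * t)) := by gcongr
    _ = 3 * E 0 * exp (-(τ / 3) * t) := by ring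
end
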